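/- arXiv:2006.08467 — 3 statements merged into one kernel-verified Lean document; each statement's English description precedes it below -/
import Mathlib

section
/- If the oblivious chase of (I_a, Σ) on the critical instance I_a terminates, then there exists a constant k_d such that for every instance I over the same predicates, the existential depth of every term in the oblivious chase of (I, Σ) is bounded by k_d. -/
namespace ChasePaper

/-- Rules: atoms are (predicate, list of variables). -/
structure Rule (P V : Type) where
  body : List (P × List V)
  head : List (P × List V)

/-- Terms appearing in the chase: constants, (instance) variables, and fresh
variables `z_{(σ,π)}` named by the rule, the existential variable, and a substitution. -/
inductive GTerm (P C V : Type) where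
  | const : C → GTerm P C V
  | var   : V → GTerm P C V
  | fresh : Rule P V → V → (V → GTerm P C V) → GTerm P C V

abbrev GAtom (P C V : Type) := P × List (GTerm P C V)

variable {P C V : Type}

def bodyVars (σ : Rule P V) : List V := σ.body.flatMap Prod.snd
def headVars (σ : Rule P V) : List V := σ.head.flatMap Prod.snd
def frontier [DecidableEq V] (σ : Rule P V) : List V :=
  (bodyVars σ).filter (· ∈ headVars σ)

/-- A rule is datalog if all head variables occur in the body. -/
def IsDatalog (σ : Rule P V) : Prop := ∀ v ∈ headVars σ, v ∈ bodyVars σ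
/-- A rule is fully-existential if every head atom contains an existential variable. -/
def IsFE (σ : Rule P V) : Prop := ∀ a ∈ σ.head, ∃ v ∈ a.2, v ∉ bodyVars σ

def applyAtom (π : V → GTerm P C V) (a : P × List V) : GAtom P C V :=
  (a.1, a.2.map π)

def restrictBody [DecidableEq V] (σ : Rule P V) (π : V → GTerm P C V) : V → GTerm P C V :=
  fun u => if u ∈ bodyVars σ then π u else GTerm.var u

def restrictFr [DecidableEq V] (σ : Rule P V) (π : V → GTerm P C V) : V → GTerm P C V :=
  fun u => if u ∈ frontier σ then π u else GTerm.var u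

/-- Oblivious naming of fresh variables: `z_{(σ,π)}`. -/
def extendO [DecidableEq V] (σ : Rule P V) (π : V → GTerm P C V) : V → GTerm P C V :=
  fun v => if v ∈ bodyVars σ then π v else GTerm.fresh σ v (restrictBody σ π)

/-- Semi-oblivious naming of fresh variables: `z_{(σ,π|fr(σ))}`. -/
def extendSO [DecidableEq V] (σ : Rule P V) (π : V → GTerm P C V) : V → GTerm P C V :=
  fun v => if v ∈ bodyVars σ then π v else GTerm.fresh σ v (restrictFr σ π)

def isTrigger (σ : Rule P V) (π : V → GTerm P C V) (S : Set (GAtom P C V)) : Prop :=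
  ∀ a ∈ σ.body, applyAtom π a ∈ S

/-- Breadth-first oblivious chase. -/
def ochase [DecidableEq V] (Rs : Set (Rule P V)) (I : Set (GAtom P C V)) : ℕ → Set (GAtom P C V)
  | 0 => I
  | i+1 => ochase Rs I i ∪
      {f | ∃ σ ∈ Rs, ∃ π, isTrigger σ π (ochase Rs I i) ∧ ∃ a ∈ σ.head, f = applyAtom (extendO σ π) a}

/-- Breadth-first semi-oblivious chase. -/
def sochase [DecidableEq V] (Rs : Set (Rule P V)) (I : Set (GAtom P C V)) : ℕ → Set (GAtom P C V)
  | 0 => I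
  | i+1 => sochase Rs I i ∪
      {f | ∃ σ ∈ Rs, ∃ π, isTrigger σ π (sochase Rs I i) ∧ ∃ a ∈ σ.head, f = applyAtom (extendSO σ π) a}

def ochaseFull [DecidableEq V] (Rs : Set (Rule P V)) (I : Set (GAtom P C V)) : Set (GAtom P C V) :=
  ⋃ i, ochase Rs I i
def sochaseFull [DecidableEq V] (Rs : Set (Rule P V)) (I : Set (GAtom P C V)) : Set (GAtom P C V) :=
  ⋃ i, sochase Rs I i

/-- Rank of a fact: the smallest breadth-first round at which it appears. -/
noncomputable def rankO [DecidableEq V] (Rs : Set (Rule P V)) (I : Set (GAtom P C V))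
    (f : GAtom P C V) : ℕ := sInf {i | f ∈ ochase Rs I i}
noncomputable def rankSO [DecidableEq V] (Rs : Set (Rule P V)) (I : Set (GAtom P C V))
    (f : GAtom P C V) : ℕ := sInf {i | f ∈ sochase Rs I i}

/-- Rank of a term: the smallest round at which some fact contains it. -/
noncomputable def trankO [DecidableEq V] (Rs : Set (Rule P V)) (I : Set (GAtom P C V))
    (t : GTerm P C V) : ℕ := sInf {i | ∃ f ∈ ochase Rs I i, t ∈ f.2}
noncomputable def trankSO [DecidableEq V] (Rs : Set (Rule P V)) (I : Set (GAtom P C V))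
    (t : GTerm P C V) : ℕ := sInf {i | ∃ f ∈ sochase Rs I i, t ∈ f.2}

/-- Existential depth of a term. -/
def depth : GTerm P C V → ℕ
  | .const _ => 0
  | .var _ => 0
  | .fresh σ _ π => 1 + List.foldr (fun v m => max (depth (π v)) m) 0 (bodyVars σ)

/-- Frontier existential depth of a term. -/
def frdepth [DecidableEq V] : GTerm P C V → ℕ
  | .const _ => 0
  | .var _ => 0
  | .fresh σ _ π =>
      if frontier σ = ([] : List V) then 1
      else 1 + List.foldr (fun v m => max (frdepth (π v)) m) 0 (frontier σ)

/-- Existential depth of a fact: max depth of its terms. -/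
def depthF (f : GAtom P C V) : ℕ := List.foldr (fun t m => max (depth t) m) 0 f.2
def frdepthF [DecidableEq V] (f : GAtom P C V) : ℕ :=
  List.foldr (fun t m => max (frdepth t) m) 0 f.2

/-- Active domain of a set of atoms. -/
def adom (S : Set (GAtom P C V)) : Set (GTerm P C V) := {t | ∃ f ∈ S, t ∈ f.2}

def mapAtom (h : GTerm P C V → GTerm P C V) (f : GAtom P C V) : GAtom P C V :=
  (f.1, f.2.map h)

/-- An embedding from `S` to `S'`: a substitution mapping every atom of `S` into `S'`. -/
def IsEmbedding (h : GTerm P C V → GTerm P C V) (S S' : Set (GAtom P C V)) : Prop :=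
  ∀ f ∈ S, mapAtom h f ∈ S'

/-- `I` is an instance w.r.t. an arity function: finite, arity-correct,
and using only constants and variables. -/
def IsInstance (ar : P → ℕ) (I : Set (GAtom P C V)) : Prop :=
  I.Finite ∧ ∀ f ∈ I, f.2.length = ar f.1 ∧
    ∀ t ∈ f.2, (∃ c, t = GTerm.const c) ∨ (∃ v, t = GTerm.var v)

def RuleOk (ar : P → ℕ) (σ : Rule P V) : Prop :=
  ∀ a ∈ σ.body ++ σ.head, a.2.length = ar a.1

/-- The critical instance over `ar` with special constant `a`. -/
def critical (ar : P → ℕ) (a : C) : Set (GAtom P C V) :=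
  {f | f.2 = List.replicate (ar f.1) (GTerm.const a)}


/-!
Collapsing every constant and variable to `a` (and keeping the skeleton of fresh terms)
commutes with the oblivious naming of fresh terms and sends any instance into `I_a`; hence it
maps round `i` of the chase of any instance into round `i` of the chase of `I_a`, without
changing depths. A term first produced in round `i` has depth at most `i`, so if the chase of
`I_a` stops at round `k`, then `k` bounds the depth of every term of every chase.
-/

def collapse [DecidableEq V] (a : C) : GTerm P C V → GTerm P C V
  | .const _ => .const a
  | .var _ => .const a
  | .fresh σ v π =>
      .fresh σ v (fun u => if u ∈ bodyVars σ then collapse a (π u) else .var u)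

lemma foldr_max_le {α : Type} {g : α → ℕ} {n : ℕ} {l : List α} (h : ∀ v ∈ l, g v ≤ n) :
    l.foldr (fun v m => max (g v) m) 0 ≤ n := by
  induction l with
  | nil => exact n.zero_le
  | cons x xs ih =>
      exact max_le (h x List.mem_cons_self) (ih fun v hv => h v (List.mem_cons_of_mem x hv))

lemma depth_collapse [DecidableEq V] (a : C) (t : GTerm P C V) :
    depth (collapse a t) = depth t := by
  induction t with
  | const => rfl
  | var => rfl
  | fresh σ v π ih =>
      simp only [collapse, depth]
      congr 1
      exact List.foldr_ext _ _ _ fun u hu _ => by simp only [hu, if_true, ih u]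

lemma collapse_extendO [DecidableEq V] (a : C) (σ : Rule P V) (π : V → GTerm P C V) (v : V) :
    collapse a (extendO σ π v) = extendO σ (collapse a ∘ π) v := by
  by_cases hv : v ∈ bodyVars σ
  · simp only [extendO, hv, if_true, Function.comp_apply]
  · simp only [extendO, hv, if_false, collapse]
    congr 1
    funext u
    by_cases hu : u ∈ bodyVars σ <;> simp [restrictBody, hu]

lemma mapAtom_applyAtom (h : GTerm P C V → GTerm P C V) (π : V → GTerm P C V)
    (b : P × List V) : mapAtom h (applyAtom π b) = applyAtom (h ∘ π) b := by
  simp [mapAtom, applyAtom]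

lemma isEmbedding_collapse_critical [DecidableEq V] {ar : P → ℕ} (a : C)
    {I : Set (GAtom P C V)} (hI : IsInstance ar I) :
    IsEmbedding (collapse a) I (critical ar a) := by
  intro f hf
  obtain ⟨hlen, hterms⟩ := hI.2 f hf
  refine List.eq_replicate_iff.mpr ⟨by simpa [mapAtom] using hlen, fun x hx => ?_⟩
  obtain ⟨t, ht, rfl⟩ := List.mem_map.mp hx
  rcases hterms t ht with ⟨c, rfl⟩ | ⟨w, rfl⟩ <;> rfl

lemma IsEmbedding.ochase [DecidableEq V] {h : GTerm P C V → GTerm P C V}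
    (hcomm : ∀ σ π v, h (extendO σ π v) = extendO σ (h ∘ π) v)
    {Rs : Set (Rule P V)} {I J : Set (GAtom P C V)} (hIJ : IsEmbedding h I J) (i : ℕ) :
    IsEmbedding h (ochase Rs I i) (ochase Rs J i) := by
  induction i with
  | zero => exact hIJ
  | succ i ih =>
      rintro f (hf | ⟨σ, hσ, π, htrig, b, hb, rfl⟩)
      · exact Or.inl (ih f hf)
      · refine Or.inr ⟨σ, hσ, h ∘ π, fun b' hb' => ?_, b, hb, ?_⟩
        · rw [← mapAtom_applyAtom]
          exact ih _ (htrig b' hb')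
        · rw [mapAtom_applyAtom]
          exact congrArg (applyAtom · b) (funext (hcomm σ π))

lemma depth_extendO_le [DecidableEq V] {σ : Rule P V} {π : V → GTerm P C V} {n : ℕ}
    (hπ : ∀ u ∈ bodyVars σ, depth (π u) ≤ n) (v : V) :
    depth (extendO σ π v) ≤ n + 1 := by
  by_cases hv : v ∈ bodyVars σ
  · simp only [extendO, hv, if_true]
    exact (hπ v hv).trans n.le_succ
  · simp only [extendO, hv, if_false, depth]
    have : List.foldr (fun u m => max (depth (restrictBody σ π u)) m) 0 (bodyVars σ) ≤ n :=
      foldr_max_le fun u hu => by simpa [restrictBody, hu] using hπ u hu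
    omega

lemma depth_le_of_mem_adom_ochase [DecidableEq V] {Rs : Set (Rule P V)}
    {I : Set (GAtom P C V)} (hI : ∀ t ∈ adom I, depth t = 0) (i : ℕ) :
    ∀ t ∈ adom (ochase Rs I i), depth t ≤ i := by
  induction i with
  | zero => exact fun t ht => (hI t ht).le
  | succ i ih =>
      rintro t ⟨f, hf | ⟨σ, hσ, π, htrig, b, hb, rfl⟩, ht⟩
      · exact (ih t ⟨f, hf, ht⟩).trans i.le_succ
      · have hbody : ∀ u ∈ bodyVars σ, depth (π u) ≤ i := by
          intro u hu
          obtain ⟨b', hb', hu'⟩ := List.mem_flatMap.mp hu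
          exact ih _ ⟨_, htrig b' hb', List.mem_map_of_mem hu'⟩
        obtain ⟨v, -, rfl⟩ := List.mem_map.mp ht
        exact depth_extendO_le hbody v

lemma depth_eq_zero_of_mem_adom_critical [DecidableEq V] (ar : P → ℕ) (a : C)
    (t : GTerm P C V) (ht : t ∈ adom (critical ar a)) : depth t = 0 := by
  obtain ⟨f, hf, htf⟩ := ht
  rw [show f.2 = _ from hf] at htf
  rw [List.eq_of_mem_replicate htf]
  rfl

theorem statement4_general {P C V : Type} [DecidableEq V] (ar : P → ℕ) (a : C)
    (Rs : Set (Rule P V))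
    (hterm : ∃ k, ochase Rs (critical ar a : Set (GAtom P C V)) k
        = ochaseFull Rs (critical ar a)) :
    ∃ kd : ℕ, ∀ I : Set (GAtom P C V), IsInstance ar I →
      ∀ t ∈ adom (ochaseFull Rs I), depth t ≤ kd := by
  obtain ⟨k, hk⟩ := hterm
  refine ⟨k, fun I hI t ⟨f, hf, htf⟩ => ?_⟩
  obtain ⟨i, hfi⟩ := Set.mem_iUnion.mp hf
  have hcrit : mapAtom (collapse a) f ∈ ochase Rs (critical ar a) k := by
    rw [hk]
    exact Set.mem_iUnion.mpr
      ⟨i, (isEmbedding_collapse_critical a hI).ochase (collapse_extendO a) i f hfi⟩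
  rw [← depth_collapse a]
  exact depth_le_of_mem_adom_ochase (depth_eq_zero_of_mem_adom_critical ar a) k _
    ⟨_, hcrit, List.mem_map_of_mem htf⟩

/-- if the oblivious chase terminates on the critical instance, then
there is a uniform bound `k_d` on the existential depth of all terms of the
oblivious chase, over all instances. -/
theorem statement4 {P C V : Type} [DecidableEq V] (ar : P → ℕ) (a : C)
    (Rs : Set (Rule P V)) (hRs : ∀ σ ∈ Rs, RuleOk ar σ)
    (hterm : ∃ k, ochase Rs (critical ar a : Set (GAtom P C V)) k
        = ochaseFull Rs (critical ar a)) :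
    ∃ kd : ℕ, ∀ I : Set (GAtom P C V), IsInstance ar I →
      ∀ t ∈ adom (ochaseFull Rs I), depth t ≤ kd :=
  statement4_general ar a Rs hterm

end ChasePaper
end

section
/- For any embedding φ from instance I to instance I' and any i ≥ 0, there exists an embedding φ' extending φ from so-chase^i(I, Σ) to so-chase^i(I', Σ) that preserves the frontier depth of terms. -/
/-!
A semi-oblivious fresh term `z_(σ, π|fr(σ))` is determined by `σ` and by the frontier terms
`π u`. So `φ` extends to all chase terms by renaming `z_(σ, π|fr(σ))` to
`z_(σ, φ' ∘ π|fr(σ))`: this maps every trigger for `I` to a trigger for `I'` and each fact it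
produces to the fact produced by the image trigger. Frontier depth only looks at the rule and
at the frontier terms, which are preserved by induction on the round, starting from the fact
that the terms of both instances are constants or variables, of frontier depth `0`.
-/

namespace ChasePaper

variable {P C V : Type}

def IsBaseTerm (t : GTerm P C V) : Prop :=
  (∃ c, t = .const c) ∨ ∃ v, t = .var v

theorem IsInstance.isBaseTerm {ar : P → ℕ} {I : Set (GAtom P C V)} (hI : IsInstance ar I)
    {t : GTerm P C V} (ht : t ∈ adom I) : IsBaseTerm t := by
  obtain ⟨f, hf, htf⟩ := ht
  exact (hI.2 f hf).2 t htf

theorem IsEmbedding.mem_adom {h : GTerm P C V → GTerm P C V} {S S' : Set (GAtom P C V)}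
    (hh : IsEmbedding h S S') {t : GTerm P C V} (ht : t ∈ adom S) : h t ∈ adom S' := by
  obtain ⟨f, hf, htf⟩ := ht
  exact ⟨mapAtom h f, hh f hf, List.mem_map_of_mem htf⟩

theorem isTrigger.mem_adom {σ : Rule P V} {π : V → GTerm P C V} {S : Set (GAtom P C V)}
    (hT : isTrigger σ π S) {v : V} (hv : v ∈ bodyVars σ) : π v ∈ adom S := by
  obtain ⟨b, hb, hvb⟩ := List.mem_flatMap.mp hv
  exact ⟨applyAtom π b, hT b hb, List.mem_map_of_mem hvb⟩

section

variable [DecidableEq V]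

theorem mem_bodyVars_of_mem_frontier {σ : Rule P V} {u : V} (hu : u ∈ frontier σ) :
    u ∈ bodyVars σ :=
  (List.mem_filter.mp hu).1

theorem frdepth_of_isBaseTerm {t : GTerm P C V} (ht : IsBaseTerm t) : frdepth t = 0 := by
  rcases ht with ⟨c, rfl⟩ | ⟨v, rfl⟩ <;> rfl

/-- Off the frontier, fresh terms carry the placeholders `var u` of `restrictFr`; keeping them
is what makes `liftTerm φ` commute with `extendSO`. -/
def liftTerm (φ : GTerm P C V → GTerm P C V) : GTerm P C V → GTerm P C V
  | .const c => φ (.const c)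
  | .var v => φ (.var v)
  | .fresh σ v π => .fresh σ v (fun u => if u ∈ frontier σ then liftTerm φ (π u) else .var u)

theorem liftTerm_of_isBaseTerm (φ : GTerm P C V → GTerm P C V) {t : GTerm P C V}
    (ht : IsBaseTerm t) : liftTerm φ t = φ t := by
  rcases ht with ⟨c, rfl⟩ | ⟨v, rfl⟩ <;> rfl

theorem liftTerm_extendSO (φ : GTerm P C V → GTerm P C V) (σ : Rule P V)
    (π : V → GTerm P C V) (v : V) :
    liftTerm φ (extendSO σ π v) = extendSO σ (liftTerm φ ∘ π) v := by
  unfold extendSO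
  split_ifs
  · rfl
  · simp only [liftTerm, GTerm.fresh.injEq, true_and]
    funext u
    simp only [restrictFr, Function.comp_apply]
    split_ifs <;> rfl

theorem frdepth_liftTerm_fresh (φ : GTerm P C V → GTerm P C V) (σ : Rule P V) (v : V)
    (π : V → GTerm P C V) (hπ : ∀ u ∈ frontier σ, frdepth (liftTerm φ (π u)) = frdepth (π u)) :
    frdepth (liftTerm φ (.fresh σ v π)) = frdepth (.fresh σ v π) := by
  simp only [liftTerm, frdepth]
  split_ifs
  · rfl
  · congr 1
    refine List.foldr_ext _ _ _ fun u hu m => ?_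
    rw [if_pos hu, hπ u hu]

variable {Rs : Set (Rule P V)} {I I' : Set (GAtom P C V)} {φ : GTerm P C V → GTerm P C V}

theorem isEmbedding_liftTerm_sochase (hI : ∀ t ∈ adom I, IsBaseTerm t)
    (hφ : IsEmbedding φ I I') (i : ℕ) :
    IsEmbedding (liftTerm φ) (sochase Rs I i) (sochase Rs I' i) := by
  induction i with
  | zero =>
    intro f hf
    have hfφ : mapAtom (liftTerm φ) f = mapAtom φ f := by
      simp only [mapAtom, Prod.mk.injEq, true_and]
      exact List.map_congr_left fun t ht => liftTerm_of_isBaseTerm φ (hI t ⟨f, hf, ht⟩)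
    exact hfφ ▸ hφ f hf
  | succ i ih =>
    rintro f (hf | ⟨σ, hσ, π, hT, a, ha, rfl⟩)
    · exact Or.inl (ih f hf)
    · refine Or.inr ⟨σ, hσ, liftTerm φ ∘ π, fun b hb => ?_, a, ha, ?_⟩
      · simpa [mapAtom, applyAtom] using ih _ (hT b hb)
      · simp only [mapAtom, applyAtom, List.map_map]
        congr 1
        exact List.map_congr_left fun v _ => liftTerm_extendSO φ σ π v

theorem frdepth_liftTerm_sochase (hI : ∀ t ∈ adom I, IsBaseTerm t)
    (hI' : ∀ t ∈ adom I', IsBaseTerm t) (hφ : IsEmbedding φ I I') (i : ℕ) :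
    ∀ t ∈ adom (sochase Rs I i), frdepth (liftTerm φ t) = frdepth t := by
  induction i with
  | zero =>
    intro t ht
    rw [liftTerm_of_isBaseTerm φ (hI t ht), frdepth_of_isBaseTerm (hI t ht),
      frdepth_of_isBaseTerm (hI' _ (hφ.mem_adom ht))]
  | succ i ih =>
    rintro t ⟨f, hf | ⟨σ, hσ, π, hT, a, ha, rfl⟩, ht⟩
    · exact ih t ⟨f, hf, ht⟩
    · obtain ⟨v, -, rfl⟩ := List.mem_map.mp ht
      unfold extendSO
      split_ifs with hv
      · exact ih _ (hT.mem_adom hv)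
      · refine frdepth_liftTerm_fresh φ σ v _ fun u hu => ?_
        rw [restrictFr, if_pos hu]
        exact ih _ (hT.mem_adom (mem_bodyVars_of_mem_frontier hu))

end

/-- any embedding `φ : I → I'` extends, for every rank `i`, to an
embedding `φ'` between the rank-`i` semi-oblivious chases that preserves the
frontier depth of terms. -/
theorem statement11 {P C V : Type} [DecidableEq V] (ar : P → ℕ)
    (Rs : Set (Rule P V)) (I I' : Set (GAtom P C V))
    (hI : IsInstance ar I) (hI' : IsInstance ar I')
    (φ : GTerm P C V → GTerm P C V) (hφ : IsEmbedding φ I I') (i : ℕ) :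
    ∃ φ' : GTerm P C V → GTerm P C V,
      (∀ t ∈ adom I, φ' t = φ t) ∧
      IsEmbedding φ' (sochase Rs I i) (sochase Rs I' i) ∧
      ∀ t ∈ adom (sochase Rs I i), frdepth t = frdepth (φ' t) := by
  have hbase : ∀ t ∈ adom I, IsBaseTerm t := fun _ => hI.isBaseTerm
  have hbase' : ∀ t ∈ adom I', IsBaseTerm t := fun _ => hI'.isBaseTerm
  refine ⟨liftTerm φ, fun t ht => liftTerm_of_isBaseTerm φ (hbase t ht),
    isEmbedding_liftTerm_sochase hbase hφ i, fun t ht => ?_⟩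
  exact (frdepth_liftTerm_sochase hbase hbase' hφ i t ht).symm

end ChasePaper
end

section
/- Assume Σ ∈ FO-R^AF, i.e., there is a constant k_AF such that for every instance I and every fact f with adom(f) ⊆ adom(I), if f ∈ o-chase(I,Σ) then rank(f) ≤ k_AF. Then for every instance I and every fact f ∈ o-chase(I,Σ), rank(f) ≤ depth(f)·(k_AF + 1) + k_AF, where depth is existential depth. -/
namespace ChasePaper

variable {P C V : Type}

/-!
Every term `t` of the oblivious chase already occurs after `depth t · (k_AF + 1)` rounds. For a
fresh term `z_{(σ,π)}` of depth `1 + D`, the terms of `π(body σ)` have depth at most `D`, so by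
induction they occur by round `D · (k_AF + 1)`; the facts `π(body σ)` then have their terms in the
active domain of that level, so the hypothesis puts them within `k_AF` further rounds, and `σ` fires
one round later, at `(D + 1) · (k_AF + 1)`. Applying the hypothesis once more to a fact `f`, whose
terms all have depth at most `depth f`, gives the bound.
-/

variable (C) in
/-- `Σ ∈ FO-R^AF` with constant `k`. -/
def AdomRankBounded [DecidableEq V] (Rs : Set (Rule P V)) (k : ℕ) : Prop :=
  ∀ S : Set (GAtom P C V), ∀ f ∈ ochaseFull Rs S, (∀ t ∈ f.2, t ∈ adom S) → rankO Rs S f ≤ k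

lemma le_foldr_max {α : Type*} (g : α → ℕ) {l : List α} {x : α} (hx : x ∈ l) :
    g x ≤ l.foldr (fun a m => max (g a) m) 0 := by
  induction l with
  | nil => cases hx
  | cons a l ih =>
    rcases List.mem_cons.mp hx with rfl | hx
    · exact le_max_left _ _
    · exact (ih hx).trans (le_max_right _ _)

lemma depth_le_depthF {t : GTerm P C V} {f : GAtom P C V} (ht : t ∈ f.2) : depth t ≤ depthF f :=
  le_foldr_max depth ht

lemma adom_mono {S S' : Set (GAtom P C V)} (h : S ⊆ S') : adom S ⊆ adom S' :=
  fun _ ⟨f, hf, ht⟩ => ⟨f, h hf, ht⟩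

lemma mem_bodyVars {σ : Rule P V} {b : P × List V} {u : V} (hb : b ∈ σ.body) (hu : u ∈ b.2) :
    u ∈ bodyVars σ :=
  List.mem_flatMap.mpr ⟨b, hb, hu⟩

section Chase

variable [DecidableEq V] {Rs : Set (Rule P V)} {I : Set (GAtom P C V)}

lemma ochase_monotone : Monotone (ochase Rs I) :=
  monotone_nat_of_le_succ fun _ => Set.subset_union_left

lemma ochase_ochase (k j : ℕ) : ochase Rs (ochase Rs I k) j = ochase Rs I (k + j) := by
  induction j with
  | zero => rfl
  | succ j ih => rw [← Nat.add_assoc]; simp only [ochase, ih]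

lemma ochaseFull_ochase (k : ℕ) : ochaseFull Rs (ochase Rs I k) = ochaseFull Rs I := by
  apply subset_antisymm <;> refine Set.iUnion_subset fun j => ?_
  · rw [ochase_ochase]
    exact Set.subset_iUnion (ochase Rs I) (k + j)
  · refine (ochase_monotone (Nat.le_add_left j k)).trans ?_
    rw [← ochase_ochase]
    exact Set.subset_iUnion _ j

lemma mem_ochase_rankO {f : GAtom P C V} (hf : f ∈ ochaseFull Rs I) :
    f ∈ ochase Rs I (rankO Rs I f) :=
  Nat.sInf_mem (Set.mem_iUnion.mp hf)

variable {kAF : ℕ}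

lemma mem_ochase_add_of_forall_mem_adom (hAF : AdomRankBounded C Rs kAF) {n : ℕ}
    {f : GAtom P C V} (hf : f ∈ ochaseFull Rs I) (hterms : ∀ t ∈ f.2, t ∈ adom (ochase Rs I n)) :
    f ∈ ochase Rs I (n + kAF) := by
  rw [← ochaseFull_ochase n] at hf
  rw [← ochase_ochase]
  exact ochase_monotone (hAF _ f hf hterms) (mem_ochase_rankO hf)

lemma applyAtom_extendO_mem_ochase (hAF : AdomRankBounded C Rs kAF) {σ : Rule P V}
    (hσ : σ ∈ Rs) {π : V → GTerm P C V} {i n : ℕ} (hπ : isTrigger σ π (ochase Rs I i))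
    (hbody : ∀ u ∈ bodyVars σ, π u ∈ adom (ochase Rs I n)) {a : P × List V} (ha : a ∈ σ.head) :
    applyAtom (extendO σ π) a ∈ ochase Rs I (n + kAF + 1) := by
  refine Or.inr ⟨σ, hσ, π, fun b hb => ?_, a, ha, rfl⟩
  refine mem_ochase_add_of_forall_mem_adom hAF (Set.mem_iUnion.mpr ⟨i, hπ b hb⟩) ?_
  intro t ht
  obtain ⟨u, hu, rfl⟩ := List.mem_map.mp ht
  exact hbody u (mem_bodyVars hb hu)

lemma depth_fresh_eq_succ (σ : Rule P V) (π : V → GTerm P C V) (v : V) :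
    ∃ D, depth (GTerm.fresh σ v (restrictBody σ π)) = D + 1 ∧
      ∀ u ∈ bodyVars σ, depth (π u) ≤ D := by
  refine ⟨_, Nat.add_comm _ _, fun u hu => ?_⟩
  have h := le_foldr_max (fun u => depth (restrictBody σ π u)) hu
  rwa [show restrictBody σ π u = π u from if_pos hu] at h

lemma mem_adom_ochase_depth (hAF : AdomRankBounded C Rs kAF) (i : ℕ) :
    ∀ t ∈ adom (ochase Rs I i), t ∈ adom (ochase Rs I (depth t * (kAF + 1))) := by
  induction i with
  | zero => exact fun t ht => adom_mono (ochase_monotone (Nat.zero_le _)) ht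
  | succ i ih =>
    rintro t ⟨f, hf | ⟨σ, hσ, π, hπ, a, ha, rfl⟩, ht⟩
    · exact ih t ⟨f, hf, ht⟩
    obtain ⟨v, hv, rfl⟩ := List.mem_map.mp ht
    have hπu : ∀ u ∈ bodyVars σ, π u ∈ adom (ochase Rs I i) := by
      intro u hu
      obtain ⟨b, hb, hub⟩ := List.mem_flatMap.mp hu
      exact ⟨applyAtom π b, hπ b hb, List.mem_map_of_mem hub⟩
    by_cases hvb : v ∈ bodyVars σ
    · simp only [extendO, if_pos hvb]
      exact ih _ (hπu v hvb)
    obtain ⟨D, hD, hdepth⟩ := depth_fresh_eq_succ σ π v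
    have hbody : ∀ u ∈ bodyVars σ, π u ∈ adom (ochase Rs I (D * (kAF + 1))) := fun u hu =>
      adom_mono (ochase_monotone (Nat.mul_le_mul_right _ (hdepth u hu))) (ih _ (hπu u hu))
    have hnew := applyAtom_extendO_mem_ochase hAF hσ hπ hbody ha
    have hlevel : D * (kAF + 1) + kAF + 1 = (D + 1) * (kAF + 1) := by ring
    have hz : extendO σ π v = GTerm.fresh σ v (restrictBody σ π) := if_neg hvb
    rw [hz, hD, ← hlevel]
    exact ⟨_, hnew, hz ▸ List.mem_map_of_mem hv⟩

end Chase

/-- if (as a consequence of FO-rewritability of full-atomic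
queries) every fact whose terms all lie in the active domain of an instance is
derived within `k_AF` oblivious breadth-first rounds from that instance, then
for every instance `I` and fact `f` of the oblivious chase,
`rank(f) ≤ depth(f)·(k_AF + 1) + k_AF`. -/
theorem statement14 {P C V : Type} [DecidableEq V] (Rs : Set (Rule P V)) (kAF : ℕ)
    (hAF : ∀ S : Set (GAtom P C V), ∀ f ∈ ochaseFull Rs S,
        (∀ t ∈ f.2, t ∈ adom S) → rankO Rs S f ≤ kAF) :
    ∀ I : Set (GAtom P C V), ∀ f ∈ ochaseFull Rs I,
      rankO Rs I f ≤ depthF f * (kAF + 1) + kAF := by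
  intro I f hf
  refine Nat.sInf_le (mem_ochase_add_of_forall_mem_adom hAF hf fun t ht => ?_)
  obtain ⟨i, hi⟩ := Set.mem_iUnion.mp hf
  refine adom_mono (ochase_monotone ?_) (mem_adom_ochase_depth hAF i t ⟨f, hi, ht⟩)
  exact Nat.mul_le_mul_right _ (depth_le_depthF ht)

end ChasePaper
end
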